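/- Let μ be a Radon measure on (X, M), Y a Banach space, and 𝒮 a μ-a.e. λ-Morse cover of X such that for each S ∈ 𝒮 one has μ(S \ S°) = 0, where S° is the interior of S. Suppose G : M → Y is countably additive, G(E) = 0 whenever μ(E) = 0, and M := sup{ Σ_i ‖G(S_i)‖ : ⟨S_i⟩ a sequence from 𝒮 that is μ-exhausting of X } < +∞. Suppose further there is a μ-measurable f : X → Y such that for every ε > 0 there is a gauge function δ : X → (0,1] with the property that for every δ-fine sequence ⟨S_i(x_i)⟩ from 𝒮 that is μ-exhausting of X, Σ_i ‖f(x_i)·μ(S_i) − G(S_i)‖ < ε. Then f is Bochner μ-integrable and ∫_X f dμ = G(X). -/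

import Mathlib

open MeasureTheory Set Metric Filter

/-- `S` is a `λ`-Morse set with tag `a`: for some `r > 0`, `B(a,r) ⊆ S ⊆ B(a,λr)`
(closed balls) and `S` is starlike with respect to `B(a,r)`. -/
def IsMorseSet {X : Type*} [NormedAddCommGroup X] [NormedSpace ℝ X]
    (lam : ℝ) (a : X) (S : Set X) : Prop :=
  ∃ r > (0:ℝ), Metric.closedBall a r ⊆ S ∧ S ⊆ Metric.closedBall a (lam * r) ∧
    ∀ y ∈ Metric.closedBall a r, ∀ x ∈ S, segment ℝ y x ⊆ S

/-- `𝒮` (a collection of tagged sets) is a fine, measurable, `λ`-Morse cover of `Ω`: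
every member is a measurable λ-Morse subset of `Ω` with the indicated tag, and every point
of `Ω` is the tag of sets of `𝒮` of arbitrarily small diameter. -/
def IsFineMorseCover {X : Type*} [NormedAddCommGroup X] [NormedSpace ℝ X] [MeasurableSpace X]
    (lam : ℝ) (Ω : Set X) (𝒮 : Set (X × Set X)) : Prop :=
  (∀ p ∈ 𝒮, IsMorseSet lam p.1 p.2 ∧ MeasurableSet p.2 ∧ p.2 ⊆ Ω) ∧
  ∀ a ∈ Ω, ∀ ε > (0:ℝ), ∃ S : Set X, (a, S) ∈ 𝒮 ∧ Metric.diam S < ε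

/-- The (finite or countably infinite) sequence of tagged sets `T` indexed by `I ⊆ ℕ`
is `μ`-exhausting of `Ω` within the collection `𝒮`: its members belong to `𝒮`,
are pairwise disjoint, and cover all but a `μ`-null subset of `Ω`. -/
def IsExhausting {X : Type*} [MeasurableSpace X] (μ : Measure X) (Ω : Set X)
    (𝒮 : Set (X × Set X)) (I : Set ℕ) (T : ℕ → X × Set X) : Prop :=
  (∀ i ∈ I, T i ∈ 𝒮) ∧
  (∀ i ∈ I, ∀ j ∈ I, i ≠ j → Disjoint (T i).2 (T j).2) ∧
  μ (Ω \ ⋃ i ∈ I, (T i).2) = 0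

/-- `𝒮` is a `μ`-a.e. `λ`-Morse cover of `Ω`: it is a fine measurable λ-Morse cover and,
for every nonempty open `U ⊆ Ω` and every gauge `δ : U → (0,1]`, there is a sequence of
`δ`-fine sets from `𝒮`, each contained in `U`, that is `μ`-exhausting of `U`. -/
def IsAEMorseCover {X : Type*} [NormedAddCommGroup X] [NormedSpace ℝ X] [MeasurableSpace X]
    (μ : Measure X) (lam : ℝ) (Ω : Set X) (𝒮 : Set (X × Set X)) : Prop :=
  IsFineMorseCover lam Ω 𝒮 ∧
  ∀ U : Set X, IsOpen U → U.Nonempty → U ⊆ Ω →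
    ∀ δ : X → ℝ, (∀ x ∈ U, δ x ∈ Set.Ioc (0:ℝ) 1) →
      ∃ I T, IsExhausting μ U 𝒮 I T ∧
        ∀ i ∈ I, (T i).2 ⊆ U ∧ (T i).2 ⊆ Metric.closedBall (T i).1 (δ (T i).1)

/-- `f` is `μ`-measurable: there is a sequence of simple functions converging to `f`
`μ`-almost everywhere. -/
def MuMeasurable {X Y : Type*} [MeasurableSpace X] [NormedAddCommGroup Y]
    (μ : Measure X) (f : X → Y) : Prop :=
  ∃ F : ℕ → MeasureTheory.SimpleFunc X Y,
    ∀ᵐ x ∂μ, Filter.Tendsto (fun n => F n x) Filter.atTop (nhds (f x))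

/-- `a` is a point of approximate continuity of `f` (relative to the tagged collection
`𝒮`): for all `ε, η > 0` there is `R > 0` such that every `S ∈ 𝒮` with tag `a` contained
in `B(a,R)` satisfies `μ {x ∈ S | ‖f a - f x‖ > η} ≤ ε · μ S`. -/
def IsApproxContPt {X Y : Type*} [NormedAddCommGroup X] [MeasurableSpace X]
    [NormedAddCommGroup Y] (μ : Measure X) (𝒮 : Set (X × Set X)) (f : X → Y) (a : X) : Prop :=
  ∀ ε > (0:ℝ), ∀ η > (0:ℝ), ∃ R > (0:ℝ), ∀ S : Set X, (a, S) ∈ 𝒮 →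
    S ⊆ Metric.closedBall a R →
    μ {x ∈ S | η < ‖f a - f x‖} ≤ ENNReal.ofReal ε * μ S

/-- `a` is a Lebesgue point of `g` with respect to the value `c` (relative to the tagged
collection `𝒮`): for every `ε > 0` there is `R > 0` such that every `S ∈ 𝒮` with tag `a`
contained in `B(a,R)` satisfies `∫_S ‖g x - c‖ dμ ≤ ε · μ S`. -/
def IsLebesguePt {X Y : Type*} [NormedAddCommGroup X] [MeasurableSpace X]
    [NormedAddCommGroup Y] (μ : Measure X) (𝒮 : Set (X × Set X)) (g : X → Y) (a : X)
    (c : Y) : Prop :=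
  ∀ ε > (0:ℝ), ∃ R > (0:ℝ), ∀ S : Set X, (a, S) ∈ 𝒮 → S ⊆ Metric.closedBall a R →
    ∫⁻ x in S, ‖g x - c‖₊ ∂μ ≤ ENNReal.ofReal ε * μ S


/-!
Integrability. For each `n`, Lusin's theorem gives a compact `Kₙ` filling `B(0, n)` up to measure
`2⁻ⁿ` on which `f` oscillates little at small scales. Refining the Riemann gauge by this scale on
`Kₙ` and by the distance to `Kₙ` off it, every set of a fine exhausting family that meets `Kₙ` has
its tag in `Kₙ`, so `∫_{Kₙ} ‖f‖ ≤ Σ μ(Sᵢ) ‖f(xᵢ)‖ + 1 ≤ Σ ‖μ(Sᵢ) f(xᵢ) - G(Sᵢ)‖ + M + 1`.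
By Borel–Cantelli almost every point lies in `Kₙ` for large `n`, and Fatou's lemma bounds `∫ ‖f‖`.

Equality. The defect `ν(E) = ∫_E f - G(E)` is countably additive and vanishes on null sets, hence
(gliding hump) it is uniformly small far out and on sets of small measure. On the union `V` of the
sets whose tags lie in a Lusin compact `K`, `ν(V)` is bounded by the Riemann sum, the oscillation
of `f` on `K`, and the mass of `f` in a thin shell around `K`; up to a null set, `Vᶜ` lies outside
a large ball or in the small set `B \ K`.
-/

open Function
open scoped ENNReal NNReal Topology

theorem Filter.exists_strictMono_forall_succ {P : ℕ → ℕ → Prop}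
    (h : ∀ n, ∀ᶠ k in atTop, P n k) : ∃ φ : ℕ → ℕ, StrictMono φ ∧ ∀ n, P (φ n) (φ (n + 1)) := by
  choose g hg using fun n => ((h n).and (eventually_gt_atTop n)).exists
  let φ : ℕ → ℕ := fun n => Nat.rec 0 (fun _ m => g m) n
  exact ⟨φ, strictMono_nat_of_lt_succ fun n => (hg (φ n)).2, fun n => (hg (φ n)).1⟩

theorem ContinuousOn.eventually_dist_le_of_dist_lt {X Y : Type*} [TopologicalSpace X]
    [PseudoMetricSpace Y] {f g : X → Y} {K : Set X} (hg : ContinuousOn g K) {η : ℝ}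
    (hfg : ∀ x ∈ K, dist (f x) (g x) < η) :
    ∀ a ∈ K, ∀ᶠ x in 𝓝[K] a, dist (f x) (f a) ≤ 3 * η := by
  intro a ha
  filter_upwards [Metric.tendsto_nhds.1 (hg a ha) η (dist_nonneg.trans_lt (hfg a ha)),
    self_mem_nhdsWithin] with x hxa hxK
  calc dist (f x) (f a) ≤ dist (f x) (g x) + dist (g x) (g a) + dist (g a) (f a) :=
        dist_triangle4 _ _ _ _
    _ ≤ 3 * η := by linarith [hfg x hxK, hfg a ha, dist_comm (g a) (f a)]

theorem Metric.exists_gauge_forall_closedBall {X : Type*} [PseudoMetricSpace X]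
    {P : X → X → Prop} (hP : ∀ a, ∀ᶠ x in 𝓝 a, P a x) {δ₀ : X → ℝ}
    (hδ₀ : ∀ x, δ₀ x ∈ Ioc (0 : ℝ) 1) :
    ∃ δ : X → ℝ, (∀ x, δ x ∈ Ioc (0 : ℝ) 1) ∧
      ∀ a, ∀ x ∈ closedBall a (δ a), x ∈ closedBall a (δ₀ a) ∧ P a x := by
  choose r hr hrP using fun a => Metric.eventually_nhds_iff.1 (hP a)
  refine ⟨fun a => min (δ₀ a) (r a / 2), fun a => ⟨lt_min (hδ₀ a).1 (half_pos (hr a)),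
    (min_le_left _ _).trans (hδ₀ a).2⟩, fun a x hx => ⟨closedBall_subset_closedBall
    (min_le_left _ _) hx, hrP a ?_⟩⟩
  exact (mem_closedBall.1 hx).trans_lt ((min_le_right _ _).trans_lt (half_lt_self (hr a)))

theorem IsCompact.exists_measure_cthickening_sdiff_lt {X : Type*} [MetricSpace X] [ProperSpace X]
    [MeasurableSpace X] [OpensMeasurableSpace X] {μ : Measure X} [IsFiniteMeasureOnCompacts μ]
    {K : Set X} (hK : IsCompact K) {t : ℝ≥0∞} (ht : t ≠ 0) :
    ∃ ω ∈ Ioc (0 : ℝ) 1, μ (cthickening ω K \ K) < t := by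
  have hμK := hK.measure_lt_top (μ := μ)
  have hlim := (tendsto_measure_cthickening_of_isCompact hK (μ := μ)).mono_left
    (nhdsWithin_le_nhds (s := Ioi 0))
  obtain ⟨ω, hωt, hω⟩ := ((hlim.eventually (gt_mem_nhds (ENNReal.lt_add_right hμK.ne ht))).and
    (Ioo_mem_nhdsGT one_pos)).exists
  refine ⟨ω, Ioo_subset_Ioc_self hω, ?_⟩
  rw [measure_sdiff (self_subset_cthickening K) hK.measurableSet.nullMeasurableSet hμK.ne]
  exact ENNReal.sub_lt_of_lt_add (measure_mono (self_subset_cthickening K)) (add_comm t _ ▸ hωt)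

theorem enorm_smul_le_enorm_sub_add {Y : Type*} [NormedAddCommGroup Y] [NormedSpace ℝ Y]
    (v w : Y) {t : ℝ≥0∞} (ht : t ≠ ∞) : t * ‖v‖ₑ ≤ ‖t.toReal • v - w‖ₑ + ‖w‖ₑ := by
  calc t * ‖v‖ₑ = ‖t.toReal • v‖ₑ := by
        rw [enorm_smul, Real.enorm_of_nonneg ENNReal.toReal_nonneg, ENNReal.ofReal_toReal ht]
    _ ≤ ‖t.toReal • v - w‖ₑ + ‖w‖ₑ := by simpa using enorm_add_le (t.toReal • v - w) w

namespace MeasureTheory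

def CountablyAdditive {X Y : Type*} [MeasurableSpace X] [NormedAddCommGroup Y]
    (G : Set X → Y) : Prop :=
  ∀ E : ℕ → Set X, (∀ i, MeasurableSet (E i)) → Pairwise (Disjoint on E) →
    Tendsto (fun n => ∑ i ∈ Finset.range n, G (E i)) atTop (𝓝 (G (⋃ i, E i)))

namespace CountablyAdditive

variable {X Y : Type*} [MeasurableSpace X] [NormedAddCommGroup Y] {G H : Set X → Y}

theorem sub (hG : CountablyAdditive G) (hH : CountablyAdditive H) :
    CountablyAdditive (G - H) := fun E hE hd => by
  simpa only [Pi.sub_apply, Finset.sum_sub_distrib] using (hG E hE hd).sub (hH E hE hd)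

theorem tendsto_zero (hG : CountablyAdditive G) {E : ℕ → Set X}
    (hE : ∀ i, MeasurableSet (E i)) (hd : Pairwise (Disjoint on E)) :
    Tendsto (fun n => G (E n)) atTop (𝓝 0) := by
  have h := hG E hE hd
  simpa [Finset.sum_range_succ] using (h.comp (tendsto_add_atTop_nat 1)).sub h

theorem union (hG : CountablyAdditive G) (hG0 : G ∅ = 0) {P Q : Set X}
    (hP : MeasurableSet P) (hQ : MeasurableSet Q) (hPQ : Disjoint P Q) :
    G (P ∪ Q) = G P + G Q := by
  let E : ℕ → Set X := fun | 0 => P | 1 => Q | _ + 2 => ∅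
  have hE : ∀ i, MeasurableSet (E i) := by
    rintro (_ | _ | _) <;> first | assumption | exact MeasurableSet.empty
  have hd : Pairwise (Disjoint on E) := by
    rintro (_ | _ | i) (_ | _ | j) hij <;> simp_all [E, onFun, hPQ.symm]
  have hU : ⋃ i, E i = P ∪ Q := by
    ext x
    simp only [mem_iUnion, mem_union]
    refine ⟨?_, ?_⟩
    · rintro ⟨_ | _ | i, hx⟩ <;> simp_all [E]
    · rintro (hx | hx)
      exacts [⟨0, hx⟩, ⟨1, hx⟩]
  have hsum : ∀ n ≥ 2, ∑ i ∈ Finset.range n, G (E i) = G P + G Q := by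
    intro n hn
    obtain ⟨k, rfl⟩ := Nat.exists_eq_add_of_le' hn
    simp [Finset.sum_range_succ', E, hG0, add_comm]
  rw [← hU]
  exact tendsto_nhds_unique (hG E hE hd) (tendsto_atTop_of_eventually_const hsum)

theorem tendsto_iUnion (hG : CountablyAdditive G) (hG0 : G ∅ = 0) {E : ℕ → Set X}
    (hE : ∀ i, MeasurableSet (E i)) (hmono : Monotone E) :
    Tendsto (fun n => G (E n)) atTop (𝓝 (G (⋃ n, E n))) := by
  have h := hG _ (MeasurableSet.disjointed hE) (disjoint_disjointed E)
  rw [iUnion_disjointed] at h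
  have hsum : ∀ n, ∑ i ∈ Finset.range (n + 1), G (disjointed E i) = G (E n) := by
    intro n
    induction n with
    | zero => simp [disjointed_zero]
    | succ n ih =>
      rw [Finset.sum_range_succ, ih, hmono.disjointed_add_one,
        ← hG.union hG0 (hE n) ((hE (n + 1)).diff (hE n)) disjoint_sdiff_self_right,
        union_sdiff_cancel (hmono n.le_succ)]
  simpa only [comp_def, hsum] using h.comp (tendsto_add_atTop_nat 1)

/-- A gliding hump argument. -/
theorem exists_forall_norm_le_of_antitone (hG : CountablyAdditive G) (hG0 : G ∅ = 0)
    {B : ℕ → Set X} (hB : ∀ k, MeasurableSet (B k)) (hanti : Antitone B)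
    (hGB : ∀ E ⊆ ⋂ k, B k, MeasurableSet E → G E = 0) {ε : ℝ} (hε : 0 < ε) :
    ∃ k, ∀ E ⊆ B k, MeasurableSet E → ‖G E‖ ≤ ε := by
  by_contra! hcon
  choose E hEB hE hεE using hcon
  have hBinf : MeasurableSet (⋂ k, B k) := .iInter hB
  have hhump : ∀ j, ∀ᶠ l in atTop, ε / 2 < ‖G (E j \ B l)‖ := by
    intro j
    have hlim : Tendsto (fun l => G (E j \ B l)) atTop (𝓝 (G (E j))) := by
      have h := hG.tendsto_iUnion hG0 (fun l => (hE j).diff (hB l))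
        fun l l' hl => sdiff_subset_sdiff_right (hanti hl)
      have hnull : G (E j \ ⋂ k, B k) = G (E j) := by
        conv_rhs => rw [← sdiff_union_inter (E j) (⋂ k, B k)]
        rw [hG.union hG0 ((hE j).diff hBinf) ((hE j).inter hBinf)
          (disjoint_sdiff_left.mono_right inter_subset_right),
          hGB _ inter_subset_right ((hE j).inter hBinf), add_zero]
      rwa [← sdiff_iInter, hnull] at h
    exact hlim.norm.eventually (lt_mem_nhds ((half_lt_self hε).trans (hεE j)))
  obtain ⟨φ, hφ, hhumpφ⟩ := Filter.exists_strictMono_forall_succ hhump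
  let D n := E (φ n) \ B (φ (n + 1))
  have hD : Pairwise (Disjoint on D) := by
    refine (pairwise_disjoint_on D).2 fun i j hij => ?_
    refine Disjoint.mono_right (sdiff_subset.trans ((hEB _).trans (hanti ?_))) disjoint_sdiff_left
    exact hφ.monotone hij
  have h0 := (hG.tendsto_zero (fun n => (hE _).diff (hB _)) hD).norm
  rw [norm_zero] at h0
  obtain ⟨n, hn⟩ := (h0.eventually (gt_mem_nhds (half_pos hε))).exists
  exact (hhumpφ n).not_gt hn

theorem exists_forall_norm_le_of_subset_compl (hG : CountablyAdditive G) (hG0 : G ∅ = 0)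
    {A : ℕ → Set X} (hA : ∀ k, MeasurableSet (A k)) (hmono : Monotone A) (hAU : ⋃ k, A k = univ)
    {ε : ℝ} (hε : 0 < ε) : ∃ k, ∀ E ⊆ (A k)ᶜ, MeasurableSet E → ‖G E‖ ≤ ε := by
  refine hG.exists_forall_norm_le_of_antitone hG0 (fun k => (hA k).compl)
    (fun k l hkl => compl_subset_compl.2 (hmono hkl)) (fun E hE _ => ?_) hε
  rw [← compl_iUnion, hAU, compl_univ, subset_empty_iff] at hE
  rw [hE, hG0]

theorem exists_forall_norm_le_of_measure_le (hG : CountablyAdditive G) (hG0 : G ∅ = 0)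
    {μ : Measure X} (hGμ : ∀ E, MeasurableSet E → μ E = 0 → G E = 0) {ε : ℝ} (hε : 0 < ε) :
    ∃ δ : ℝ≥0∞, 0 < δ ∧ ∀ E, MeasurableSet E → μ E ≤ δ → ‖G E‖ ≤ ε := by
  by_contra! hcon
  choose E hE hμE hεE using fun k : ℕ => hcon (2⁻¹ ^ k) (ENNReal.pow_pos (by simp) k)
  let B k := ⋃ i ≥ k, E i
  have hsum : ∑' k, μ (E k) ≠ ∞ := ne_top_of_le_ne_top (by simp) (ENNReal.tsum_le_tsum hμE)
  have hnull : μ (⋂ k, B k) = 0 := by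
    simpa only [B, limsup_eq_iInf_iSup_of_nat, iSup_eq_iUnion, iInf_eq_iInter]
      using measure_limsup_atTop_eq_zero hsum
  obtain ⟨k, hk⟩ := hG.exists_forall_norm_le_of_antitone hG0
    (B := B) (fun k => .biUnion (to_countable _) fun i _ => hE i)
    (fun k l hkl => biUnion_mono (fun i hi => le_trans hkl hi) fun _ _ => le_rfl)
    (fun F hF hFm => hGμ F hFm (measure_mono_null hF hnull)) hε
  exact (hεE k).not_ge (hk _ (subset_biUnion_of_mem (u := E) (le_refl k)) (hE k))

theorem norm_le_of_measure_inter_le (hG : CountablyAdditive G) (hG0 : G ∅ = 0) {μ : Measure X}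
    {A W : Set X} (hA : MeasurableSet A) (hW : MeasurableSet W) {ε : ℝ} {θ : ℝ≥0∞}
    (hout : ∀ E ⊆ Aᶜ, MeasurableSet E → ‖G E‖ ≤ ε)
    (hsmall : ∀ E, MeasurableSet E → μ E ≤ θ → ‖G E‖ ≤ ε) (hWA : μ (W ∩ A) ≤ θ) :
    ‖G W‖ ≤ 2 * ε := by
  rw [← inter_union_sdiff W A, hG.union hG0 (hW.inter hA) (hW.diff hA) disjoint_sdiff_inter.symm,
    two_mul]
  exact (norm_add_le _ _).trans
    (add_le_add (hsmall _ (hW.inter hA) hWA) (hout _ (fun x hx => hx.2) (hW.diff hA)))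

theorem enorm_iUnion_le_tsum (hG : CountablyAdditive G) {E : ℕ → Set X}
    (hE : ∀ i, MeasurableSet (E i)) (hd : Pairwise (Disjoint on E)) :
    ‖G (⋃ i, E i)‖ₑ ≤ ∑' i, ‖G (E i)‖ₑ :=
  le_of_tendsto' ((continuous_enorm.tendsto _).comp (hG E hE hd)) fun _ =>
    (enorm_sum_le _ _).trans (ENNReal.sum_le_tsum _)

end CountablyAdditive

theorem countablyAdditive_setIntegral {X Y : Type*} [MeasurableSpace X] [NormedAddCommGroup Y]
    [NormedSpace ℝ Y] {μ : Measure X} {f : X → Y} (hf : Integrable f μ) :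
    CountablyAdditive fun E => ∫ x in E, f x ∂μ := fun _ hE hd =>
  (hasSum_integral_iUnion hE hd hf.integrableOn).tendsto_sum_nat

section Lusin

variable {X : Type*} [TopologicalSpace X] [T2Space X] [MeasurableSpace X]
  [OpensMeasurableSpace X] {μ : Measure X} [μ.InnerRegularCompactLTTop]

theorem SimpleFunc.exists_isCompact_continuousOn {Y : Type*} [TopologicalSpace Y]
    (s : SimpleFunc X Y) {A : Set X} (hA : MeasurableSet A) (hμA : μ A ≠ ∞) {θ : ℝ≥0∞}
    (hθ : θ ≠ 0) : ∃ K ⊆ A, IsCompact K ∧ μ (A \ K) ≤ θ ∧ ContinuousOn s K := by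
  classical
  have hfiber : ∀ y, ∃ L ⊆ A ∩ s ⁻¹' {y}, IsCompact L ∧
      μ ((A ∩ s ⁻¹' {y}) \ L) < θ / s.range.card := fun y =>
    (hA.inter (s.measurableSet_fiber y)).exists_isCompact_sdiff_lt
      (measure_ne_top_of_subset inter_subset_left hμA) (by simp [hθ])
  choose L hLA hL hLμ using hfiber
  have hLs : ∀ y, ∀ x ∈ L y, s x = y := fun y x hx => ((hLA y) hx).2
  refine ⟨⋃ y ∈ s.range, L y, iUnion₂_subset fun y _ => (hLA y).trans inter_subset_left,
    s.range.isCompact_biUnion fun y _ => hL y, ?_, ?_⟩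
  · have hcover : A \ ⋃ y ∈ s.range, L y ⊆ ⋃ y ∈ s.range, (A ∩ s ⁻¹' {y}) \ L y := by
      intro x ⟨hxA, hxL⟩
      simp only [mem_iUnion, not_exists] at hxL
      exact mem_biUnion (s.mem_range_self x) ⟨⟨hxA, rfl⟩, hxL _ (s.mem_range_self x)⟩
    calc μ (A \ ⋃ y ∈ s.range, L y)
        ≤ ∑ y ∈ s.range, μ ((A ∩ s ⁻¹' {y}) \ L y) :=
          (measure_mono hcover).trans (measure_biUnion_finset_le _ _)
      _ ≤ s.range.card * (θ / s.range.card) := by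
          rw [← nsmul_eq_mul]
          exact Finset.sum_le_card_nsmul _ _ _ fun y _ => (hLμ y).le
      _ ≤ θ := ENNReal.mul_div_le
  · refine continuousOn_iff_isClosed.2 fun t _ => ⟨⋃ y ∈ s.range.filter (· ∈ t), L y,
      isClosed_biUnion_finset fun y _ => (hL y).isClosed, ?_⟩
    ext x
    simp only [mem_inter_iff, mem_preimage, mem_iUnion, Finset.mem_filter, exists_prop]
    constructor
    · rintro ⟨hxt, y, hy, hxy⟩
      exact ⟨⟨y, ⟨hy, hLs y x hxy ▸ hxt⟩, hxy⟩, y, hy, hxy⟩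
    · rintro ⟨⟨y, ⟨hy, hyt⟩, hxy⟩, -⟩
      exact ⟨hLs y x hxy ▸ hyt, y, hy, hxy⟩

/-- Approximate Lusin theorem, from Egorov's theorem and Lusin's theorem for simple functions. -/
theorem AEStronglyMeasurable.exists_isCompact_continuousOn_dist_lt {Y : Type*} [MetricSpace Y]
    {f : X → Y} (hf : AEStronglyMeasurable f μ) {A : Set X} (hA : MeasurableSet A)
    (hμA : μ A ≠ ∞) {θ : ℝ≥0∞} (hθ : θ ≠ 0) {η : ℝ} (hη : 0 < η) :
    ∃ K ⊆ A, IsCompact K ∧ μ (A \ K) ≤ θ ∧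
      ∃ g : X → Y, ContinuousOn g K ∧ ∀ x ∈ K, dist (f x) (g x) < η := by
  obtain ⟨N, hfN, hN, hμN⟩ := exists_measurable_superset_of_null (ae_iff.1 hf.ae_eq_mk)
  have hg := hf.stronglyMeasurable_mk
  obtain ⟨r, -, hr, hrθ⟩ := ENNReal.lt_iff_exists_real_btwn.1 (ENNReal.half_pos hθ)
  obtain ⟨t, -, ht, hμt, hunif⟩ := tendstoUniformlyOn_of_ae_tendsto
    (fun n => (hg.approx n).stronglyMeasurable) hg (hA.diff hN)
    (measure_ne_top_of_subset sdiff_subset hμA) (ae_of_all _ fun x _ => hg.tendsto_approx x)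
    (ENNReal.ofReal_pos.1 hr)
  obtain ⟨n, hn⟩ := (Metric.tendstoUniformlyOn_iff.1 hunif η hη).exists
  obtain ⟨K, hKA, hK, hμK, hcont⟩ := (hg.approx n).exists_isCompact_continuousOn
    ((hA.diff hN).diff ht) (measure_ne_top_of_subset (sdiff_subset.trans sdiff_subset) hμA)
    (ENNReal.half_pos hθ).ne'
  refine ⟨K, hKA.trans (sdiff_subset.trans sdiff_subset), hK, ?_, hg.approx n, hcont,
    fun x hx => ?_⟩
  · have hcover : A \ K ⊆ N ∪ (t ∪ ((A \ N) \ t) \ K) := by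
      intro x ⟨hxA, hxK⟩
      by_cases hxN : x ∈ N
      · exact Or.inl hxN
      by_cases hxt : x ∈ t
      · exact Or.inr (Or.inl hxt)
      · exact Or.inr (Or.inr ⟨⟨⟨hxA, hxN⟩, hxt⟩, hxK⟩)
    calc μ (A \ K) ≤ μ N + (μ t + μ (((A \ N) \ t) \ K)) :=
          (measure_mono hcover).trans
            ((measure_union_le _ _).trans (add_le_add_right (measure_union_le _ _) _))
      _ ≤ 0 + (θ / 2 + θ / 2) := by gcongr; exacts [hμN.le, hμt.trans hrθ.le]
      _ = θ := by rw [zero_add, ENNReal.add_halves]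
  · have hx' := hKA hx
    have hfx : f x = hf.mk f x := by_contra fun h => hx'.1.2 (hfN h)
    rw [hfx]
    exact hn x hx'

theorem AEStronglyMeasurable.exists_isCompact_eventually_dist_le {Y : Type*}
    [NormedAddCommGroup Y] {f : X → Y} (hf : AEStronglyMeasurable f μ) {A : Set X}
    (hA : MeasurableSet A) (hμA : μ A ≠ ∞) {θ : ℝ≥0∞} (hθ : θ ≠ 0) {η : ℝ} (hη : 0 < η) :
    ∃ K ⊆ A, IsCompact K ∧ μ (A \ K) ≤ θ ∧
      (∀ a ∈ K, ∀ᶠ x in 𝓝[K] a, dist (f x) (f a) ≤ η) ∧ ∃ C, ∀ x ∈ K, ‖f x‖ ≤ C := by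
  obtain ⟨K, hKA, hK, hμK, g, hg, hfg⟩ :=
    hf.exists_isCompact_continuousOn_dist_lt hA hμA hθ (div_pos hη three_pos)
  obtain ⟨C, hC⟩ := hK.exists_bound_of_continuousOn hg
  refine ⟨K, hKA, hK, hμK, ?_, C + η / 3, fun x hx => ?_⟩
  · simpa only [mul_div_cancel₀ η three_ne_zero] using hg.eventually_dist_le_of_dist_lt hfg
  · have := norm_le_norm_add_norm_sub' (f x) (g x)
    rw [← dist_eq_norm] at this
    linarith [hC x hx, hfg x hx]

end Lusin

theorem lintegral_le_of_ae_eventually_mem {X : Type*} [MeasurableSpace X] {μ : Measure X}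
    {g : X → ℝ≥0∞} (hg : AEMeasurable g μ) {K : ℕ → Set X} (hK : ∀ n, MeasurableSet (K n))
    (hae : ∀ᵐ x ∂μ, ∀ᶠ n in atTop, x ∈ K n) {c : ℝ≥0∞}
    (hc : ∀ n, ∫⁻ x in K n, g x ∂μ ≤ c) : ∫⁻ x, g x ∂μ ≤ c := by
  have hlim : ∀ᵐ x ∂μ, liminf (fun n => (K n).indicator g x) atTop = g x := by
    filter_upwards [hae] with x hx
    exact (tendsto_const_nhds.congr' (hx.mono fun n hn => (indicator_of_mem hn g).symm)).liminf_eq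
  calc ∫⁻ x, g x ∂μ = ∫⁻ x, liminf (fun n => (K n).indicator g x) atTop ∂μ :=
        (lintegral_congr_ae hlim).symm
    _ ≤ liminf (fun n => ∫⁻ x, (K n).indicator g x ∂μ) atTop :=
        lintegral_liminf_le' fun n => hg.indicator (hK n)
    _ ≤ c := by
        simp_rw [lintegral_indicator (hK _)]
        exact liminf_le_of_le (by isBoundedDefault) fun b hb =>
          hb.exists.elim fun n hn => hn.trans (hc n)

end MeasureTheory

theorem MuMeasurable.aestronglyMeasurable {X Y : Type*} [MeasurableSpace X]
    [NormedAddCommGroup Y] {μ : Measure X} {f : X → Y} (hf : MuMeasurable μ f) :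
    AEStronglyMeasurable f μ :=
  let ⟨F, hF⟩ := hf
  aestronglyMeasurable_of_tendsto_ae atTop (fun n => (F n).aestronglyMeasurable) hF

section MorseCover

variable {X Y : Type*} [NormedAddCommGroup X] [MeasurableSpace X]

theorem IsAEMorseCover.exists_isExhausting_forall [NormedSpace ℝ X] {μ : Measure X} {lam : ℝ}
    {𝒮 : Set (X × Set X)} (h𝒮 : IsAEMorseCover μ lam univ 𝒮) {P : X → X → Prop}
    (hP : ∀ a, ∀ᶠ x in 𝓝 a, P a x) {δ₀ : X → ℝ} (hδ₀ : ∀ x, δ₀ x ∈ Ioc (0 : ℝ) 1) :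
    ∃ I T, IsExhausting μ univ 𝒮 I T ∧
      ∀ i ∈ I, (T i).2 ⊆ closedBall (T i).1 (δ₀ (T i).1) ∧ ∀ x ∈ (T i).2, P (T i).1 x := by
  obtain ⟨δ, hδ, hδP⟩ := exists_gauge_forall_closedBall hP hδ₀
  obtain ⟨I, T, hexh, hfine⟩ :=
    h𝒮.2 univ isOpen_univ univ_nonempty subset_rfl δ fun x _ => hδ x
  exact ⟨I, T, hexh, fun i hi => ⟨fun x hx => (hδP _ x ((hfine i hi).2 hx)).1,
    fun x hx => (hδP _ x ((hfine i hi).2 hx)).2⟩⟩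

structure IsAdaptedFamily [PseudoMetricSpace Y] (μ : Measure X) (K : Set X) (f : X → Y)
    (η ω : ℝ) (s : ℕ → Set X) (a : ℕ → X) : Prop where
  measurableSet : ∀ i, MeasurableSet (s i)
  disjoint : Pairwise (Disjoint on s)
  measure_sdiff_iUnion : μ (K \ ⋃ i, s i) = 0
  tag_mem : ∀ i, ∀ x ∈ s i, a i ∈ K
  dist_le : ∀ i, ∀ x ∈ s i, dist x (a i) ≤ ω
  dist_apply_le : ∀ i, ∀ x ∈ s i, x ∈ K → dist (f x) (f (a i)) ≤ η

/-- Keep the members of a fine exhausting family whose tags lie in `K`; the gauge is refined so that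
members with tags off `K` miss `K`. -/
theorem IsAEMorseCover.exists_isAdaptedFamily [NormedSpace ℝ X] [PseudoMetricSpace Y]
    {μ : Measure X} {lam : ℝ} {𝒮 : Set (X × Set X)} (h𝒮 : IsAEMorseCover μ lam univ 𝒮)
    {K : Set X} (hK : IsClosed K) {f : X → Y} {η : ℝ}
    (hf : ∀ a ∈ K, ∀ᶠ x in 𝓝[K] a, dist (f x) (f a) ≤ η) {ω : ℝ} (hω : 0 < ω) {δ₀ : X → ℝ}
    (hδ₀ : ∀ x, δ₀ x ∈ Ioc (0 : ℝ) 1) :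
    ∃ I T, IsExhausting μ univ 𝒮 I T ∧ (∀ i ∈ I, (T i).2 ⊆ closedBall (T i).1 (δ₀ (T i).1)) ∧
      ∃ s a, IsAdaptedFamily μ K f η ω s a ∧ ∀ F : Set X → X → ℝ≥0∞, (∀ x, F ∅ x = 0) →
        ∑' i, F (s i) (a i) ≤ ∑' i : I, F (T i).2 (T i).1 := by
  classical
  let P a x := (a ∉ K → x ∉ K) ∧ (a ∈ K → dist x a ≤ ω ∧ (x ∈ K → dist (f x) (f a) ≤ η))
  have hP : ∀ a, ∀ᶠ x in 𝓝 a, P a x := by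
    intro a
    by_cases ha : a ∈ K
    · filter_upwards [closedBall_mem_nhds a hω, eventually_nhdsWithin_iff.1 (hf a ha)]
        with x hxa hxf using ⟨absurd ha, fun _ => ⟨hxa, hxf⟩⟩
    · filter_upwards [hK.isOpen_compl.mem_nhds ha] with x hx
        using ⟨fun _ => hx, fun h => absurd h ha⟩
  obtain ⟨I, T, hexh, hIT⟩ := h𝒮.exists_isExhausting_forall hP hδ₀
  let s i := if i ∈ I ∧ (T i).1 ∈ K then (T i).2 else ∅
  have hs : ∀ i, ∀ x ∈ s i, i ∈ I ∧ (T i).1 ∈ K ∧ x ∈ (T i).2 := by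
    intro i x hx
    by_cases hi : i ∈ I ∧ (T i).1 ∈ K
    · simp only [s, if_pos hi] at hx; exact ⟨hi.1, hi.2, hx⟩
    · simp [s, if_neg hi] at hx
  have hPs : ∀ i, ∀ x ∈ s i, P (T i).1 x := fun i x hx =>
    (hIT i (hs i x hx).1).2 x (hs i x hx).2.2
  refine ⟨I, T, hexh, fun i hi => (hIT i hi).1, s, fun i => (T i).1,
    ⟨fun i => ?_, fun i j hij => ?_, ?_, fun i x hx => (hs i x hx).2.1,
      fun i x hx => ((hPs i x hx).2 (hs i x hx).2.1).1,
      fun i x hx => ((hPs i x hx).2 (hs i x hx).2.1).2⟩, fun F hF => ?_⟩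
  · by_cases hi : i ∈ I ∧ (T i).1 ∈ K
    · simpa [s, if_pos hi] using (h𝒮.1.1 _ (hexh.1 i hi.1)).2.1
    · simp [s, if_neg hi]
  · refine disjoint_left.2 fun x hxi hxj => ?_
    exact disjoint_left.1 (hexh.2.1 i (hs i x hxi).1 j (hs j x hxj).1 hij)
      (hs i x hxi).2.2 (hs j x hxj).2.2
  · refine measure_mono_null (fun x hx => ?_) hexh.2.2
    obtain ⟨hxK, hxs⟩ := hx
    refine ⟨mem_univ x, fun hxT => ?_⟩
    obtain ⟨i, hi, hxi⟩ := mem_iUnion₂.1 hxT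
    have htag : (T i).1 ∈ K := by_contra fun h => ((hIT i hi).2 x hxi).1 h hxK
    exact hxs (mem_iUnion.2 ⟨i, by simpa [s, hi, htag] using hxi⟩)
  · rw [tsum_subtype I fun i => F (T i).2 (T i).1]
    refine ENNReal.tsum_le_tsum fun i => ?_
    by_cases hi : i ∈ I ∧ (T i).1 ∈ K
    · simp [s, if_pos hi, indicator_of_mem hi.1]
    · simp [s, if_neg hi, hF]

end MorseCover

namespace IsAdaptedFamily

variable {X Y : Type*} [NormedAddCommGroup X] [MeasurableSpace X] [NormedAddCommGroup Y]
  {μ : Measure X} {K : Set X} {f : X → Y} {η ω : ℝ} {s : ℕ → Set X} {a : ℕ → X}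

theorem measure_ne_top [ProperSpace X] [IsFiniteMeasureOnCompacts μ]
    (h : IsAdaptedFamily μ K f η ω s a) (i : ℕ) : μ (s i) ≠ ∞ :=
  measure_ne_top_of_subset (fun x hx => mem_closedBall.2 (h.dist_le i x hx))
    (isCompact_closedBall _ _).measure_lt_top.ne

theorem setLIntegral_enorm_le (h : IsAdaptedFamily μ K f η ω s a) (hK : MeasurableSet K) :
    ∫⁻ x in K, ‖f x‖ₑ ∂μ ≤ ∑' i, μ (s i) * ‖f (a i)‖ₑ + ENNReal.ofReal η * μ K := by
  have hKs : K ≤ᵐ[μ] ⋃ i, s i ∩ K := by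
    rw [ae_le_set, ← iUnion_inter, sdiff_inter_self_eq_sdiff]
    exact h.measure_sdiff_iUnion
  have hd : Pairwise (Disjoint on fun i => s i ∩ K) :=
    fun i j hij => (h.disjoint hij).mono inter_subset_left inter_subset_left
  have hle : ∀ i, ∀ x ∈ s i ∩ K, ‖f x‖ₑ ≤ ‖f (a i)‖ₑ + ENNReal.ofReal η := by
    intro i x ⟨hxs, hxK⟩
    calc ‖f x‖ₑ ≤ ‖f (a i)‖ₑ + ‖f x - f (a i)‖ₑ := by
          simpa using enorm_add_le (f (a i)) (f x - f (a i))
      _ ≤ ‖f (a i)‖ₑ + ENNReal.ofReal η := by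
          rw [← edist_eq_enorm_sub, edist_dist]
          gcongr
          exact h.dist_apply_le i x hxs hxK
  calc ∫⁻ x in K, ‖f x‖ₑ ∂μ ≤ ∫⁻ x in ⋃ i, s i ∩ K, ‖f x‖ₑ ∂μ := lintegral_mono_set' hKs
    _ = ∑' i, ∫⁻ x in s i ∩ K, ‖f x‖ₑ ∂μ :=
        lintegral_iUnion (fun i => (h.measurableSet i).inter hK) hd _
    _ ≤ ∑' i, (‖f (a i)‖ₑ + ENNReal.ofReal η) * μ (s i ∩ K) := ENNReal.tsum_le_tsum fun i =>
        (setLIntegral_mono measurable_const (hle i)).trans_eq (setLIntegral_const _ _)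
    _ ≤ ∑' i, (μ (s i) * ‖f (a i)‖ₑ + ENNReal.ofReal η * μ (s i ∩ K)) :=
        ENNReal.tsum_le_tsum fun i => by
          rw [add_mul, mul_comm]
          gcongr
          exact inter_subset_left
    _ = ∑' i, μ (s i) * ‖f (a i)‖ₑ + ENNReal.ofReal η * μ (⋃ i, s i ∩ K) := by
        rw [ENNReal.tsum_add, ENNReal.tsum_mul_left,
          measure_iUnion hd fun i => (h.measurableSet i).inter hK]
    _ ≤ ∑' i, μ (s i) * ‖f (a i)‖ₑ + ENNReal.ofReal η * μ K := by
        gcongr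
        exact iUnion_subset fun i => inter_subset_right

variable [NormedSpace ℝ Y] [CompleteSpace Y] [ProperSpace X] [IsFiniteMeasureOnCompacts μ]

theorem enorm_setIntegral_sub_smul_le (h : IsAdaptedFamily μ K f η ω s a)
    (hf : Integrable f μ) {C : ℝ} (hC : ∀ x ∈ K, ‖f x‖ ≤ C) (i : ℕ) :
    ‖∫ x in s i, f x ∂μ - (μ (s i)).toReal • f (a i)‖ₑ ≤
      ∫⁻ x in s i, ENNReal.ofReal η + Kᶜ.indicator (fun x => ‖f x‖ₑ + ENNReal.ofReal C) x ∂μ := by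
  rw [← measureReal_def, ← setIntegral_const,
    ← integral_sub hf.integrableOn (integrableOn_const (h.measure_ne_top i))]
  refine (enorm_integral_le_lintegral_enorm _).trans
    (setLIntegral_mono' (h.measurableSet i) fun x hx => ?_)
  by_cases hxK : x ∈ K
  · rw [← edist_eq_enorm_sub, edist_dist]
    exact (ENNReal.ofReal_le_ofReal (h.dist_apply_le i x hx hxK)).trans le_self_add
  · rw [indicator_of_mem (mem_compl hxK)]
    refine le_add_left ((enorm_sub_le).trans (add_le_add_right ?_ _))
    rw [← ofReal_norm]
    exact ENNReal.ofReal_le_ofReal (hC _ (h.tag_mem i x hx))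

theorem tsum_enorm_setIntegral_sub_smul_le (h : IsAdaptedFamily μ K f η ω s a)
    (hK : MeasurableSet K) (hf : Integrable f μ) {C : ℝ} (hC : ∀ x ∈ K, ‖f x‖ ≤ C) :
    ∑' i, ‖∫ x in s i, f x ∂μ - (μ (s i)).toReal • f (a i)‖ₑ ≤
      ENNReal.ofReal η * μ (cthickening ω K) + ∫⁻ x in cthickening ω K \ K, ‖f x‖ₑ ∂μ +
        ENNReal.ofReal C * μ (cthickening ω K \ K) := by
  have hsZ : ⋃ i, s i ⊆ cthickening ω K := iUnion_subset fun i x hx =>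
    mem_cthickening_of_dist_le x (a i) ω K (h.tag_mem i x hx) (h.dist_le i x hx)
  calc ∑' i, ‖∫ x in s i, f x ∂μ - (μ (s i)).toReal • f (a i)‖ₑ
      ≤ ∑' i, ∫⁻ x in s i,
          ENNReal.ofReal η + Kᶜ.indicator (fun x => ‖f x‖ₑ + ENNReal.ofReal C) x ∂μ :=
        ENNReal.tsum_le_tsum (h.enorm_setIntegral_sub_smul_le hf hC)
    _ = ∫⁻ x in ⋃ i, s i,
          ENNReal.ofReal η + Kᶜ.indicator (fun x => ‖f x‖ₑ + ENNReal.ofReal C) x ∂μ :=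
        (lintegral_iUnion h.measurableSet h.disjoint _).symm
    _ ≤ ∫⁻ x in cthickening ω K,
          ENNReal.ofReal η + Kᶜ.indicator (fun x => ‖f x‖ₑ + ENNReal.ofReal C) x ∂μ :=
        lintegral_mono_set hsZ
    _ = _ := by
        rw [lintegral_add_left measurable_const, setLIntegral_const,
          lintegral_indicator hK.compl, Measure.restrict_restrict hK.compl, inter_comm,
          ← sdiff_eq, lintegral_add_right _ measurable_const, setLIntegral_const, add_assoc,
          mul_comm (ENNReal.ofReal C)]

theorem norm_setIntegral_iUnion_sub_le (h : IsAdaptedFamily μ K f η ω s a)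
    (hK : MeasurableSet K) (hf : Integrable f μ) {G : Set X → Y} (hG : CountablyAdditive G)
    {C : ℝ} (hC : ∀ x ∈ K, ‖f x‖ ≤ C) {ε : ℝ} (hε : 0 ≤ ε)
    (hη : ENNReal.ofReal η * μ (cthickening ω K) ≤ ENNReal.ofReal ε)
    (hshell : μ (cthickening ω K \ K) ≤ ENNReal.ofReal ε / ENNReal.ofReal C)
    (hfshell : ∫⁻ x in cthickening ω K \ K, ‖f x‖ₑ ∂μ ≤ ENNReal.ofReal ε)
    (hR : ∑' i, ‖(μ (s i)).toReal • f (a i) - G (s i)‖ₑ ≤ ENNReal.ofReal ε) :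
    ‖∫ x in ⋃ i, s i, f x ∂μ - G (⋃ i, s i)‖ ≤ 4 * ε := by
  rw [← ENNReal.ofReal_le_ofReal_iff (by positivity), ofReal_norm,
    show 4 * ε = ε + ε + ε + ε by ring, ENNReal.ofReal_add (by positivity) hε,
    ENNReal.ofReal_add (by positivity) hε, ENNReal.ofReal_add hε hε]
  refine (((countablyAdditive_setIntegral hf).sub hG).enorm_iUnion_le_tsum h.measurableSet
    h.disjoint).trans ?_
  have hsplit : ∀ i, ‖((fun E => ∫ x in E, f x ∂μ) - G) (s i)‖ₑ ≤
      ‖∫ x in s i, f x ∂μ - (μ (s i)).toReal • f (a i)‖ₑ +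
        ‖(μ (s i)).toReal • f (a i) - G (s i)‖ₑ := fun i => by
    simpa only [Pi.sub_apply, sub_add_sub_cancel] using enorm_add_le
      (∫ x in s i, f x ∂μ - (μ (s i)).toReal • f (a i)) ((μ (s i)).toReal • f (a i) - G (s i))
  refine (ENNReal.tsum_le_tsum hsplit).trans (ENNReal.tsum_add.trans_le (add_le_add
    ((h.tsum_enorm_setIntegral_sub_smul_le hK hf hC).trans ?_) hR))
  gcongr
  exact (mul_le_mul_right (hshell) _).trans ENNReal.mul_div_le

end IsAdaptedFamily

section RiemannSums

variable {X Y : Type*} [NormedAddCommGroup X] [NormedSpace ℝ X] [MeasurableSpace X]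
  [NormedAddCommGroup Y] [NormedSpace ℝ Y]

def RiemannSumsConverge (μ : Measure X) (𝒮 : Set (X × Set X)) (f : X → Y) (G : Set X → Y) :
    Prop :=
  ∀ ε > (0 : ℝ), ∃ δ : X → ℝ, (∀ x, δ x ∈ Ioc (0 : ℝ) 1) ∧
    ∀ I T, IsExhausting μ univ 𝒮 I T → (∀ i ∈ I, (T i).2 ⊆ closedBall (T i).1 (δ (T i).1)) →
      ∑' i : I, ‖(μ (T i).2).toReal • f (T i).1 - G (T i).2‖ₑ < ENNReal.ofReal ε

variable [ProperSpace X] [OpensMeasurableSpace X] {μ : Measure X} [IsFiniteMeasureOnCompacts μ]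
  [μ.InnerRegularCompactLTTop] {lam : ℝ} {𝒮 : Set (X × Set X)} {G : Set X → Y} {f : X → Y}

theorem integrable_of_riemannSumsConverge (h𝒮 : IsAEMorseCover μ lam univ 𝒮) (hG0 : G ∅ = 0)
    {M : ℝ≥0∞} (hM : M < ∞)
    (hMsup : ∀ I T, IsExhausting μ univ 𝒮 I T → ∑' i : I, ‖G (T i).2‖ₑ ≤ M)
    (hf : AEStronglyMeasurable f μ) (hR : RiemannSumsConverge μ 𝒮 f G) : Integrable f μ := by
  obtain ⟨δ, hδ, hδR⟩ := hR 1 one_pos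
  have hK : ∀ n : ℕ, ∃ K, MeasurableSet K ∧ μ (closedBall 0 n \ K) ≤ 2⁻¹ ^ n ∧
      ∫⁻ x in K, ‖f x‖ₑ ∂μ ≤ 1 + M + 1 := by
    intro n
    have hμB : μ (closedBall 0 n) ≠ ∞ := (isCompact_closedBall _ _).measure_lt_top.ne
    obtain ⟨η, hη, hημ⟩ := ENNReal.exists_nnreal_pos_mul_lt hμB one_ne_zero
    obtain ⟨K, hKB, hK, hμK, hfK, -⟩ := hf.exists_isCompact_eventually_dist_le
      measurableSet_closedBall hμB (θ := 2⁻¹ ^ n) (by simp) (NNReal.coe_pos.2 hη)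
    obtain ⟨I, T, hexh, hfine, s, a, hsa, hsub⟩ :=
      h𝒮.exists_isAdaptedFamily hK.isClosed hfK one_pos hδ
    refine ⟨K, hK.measurableSet, hμK, ?_⟩
    calc ∫⁻ x in K, ‖f x‖ₑ ∂μ ≤ ∑' i, μ (s i) * ‖f (a i)‖ₑ + ENNReal.ofReal η * μ K :=
          hsa.setLIntegral_enorm_le hK.measurableSet
      _ ≤ ∑' i, ‖(μ (s i)).toReal • f (a i) - G (s i)‖ₑ + ∑' i, ‖G (s i)‖ₑ + 1 := by
          gcongr
          · rw [← ENNReal.tsum_add]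
            exact ENNReal.tsum_le_tsum fun i =>
              enorm_smul_le_enorm_sub_add _ _ (hsa.measure_ne_top i)
          · rw [ENNReal.ofReal_coe_nnreal]
            exact le_trans (by gcongr) hημ.le
      _ ≤ 1 + M + 1 := by
          gcongr
          · refine (hsub (fun S x => ‖(μ S).toReal • f x - G S‖ₑ) fun x => by simp [hG0]).trans ?_
            simpa using (hδR I T hexh hfine).le
          · exact (hsub (fun S _ => ‖G S‖ₑ) fun x => by simp [hG0]).trans (hMsup I T hexh)
  choose K hK hμK hKf using hK
  have hsum : ∑' n : ℕ, μ (closedBall 0 n \ K n) ≠ ∞ :=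
    ne_top_of_le_ne_top (by simp) (ENNReal.tsum_le_tsum hμK)
  have hae : ∀ᵐ x ∂μ, ∀ᶠ n in atTop, x ∈ K n := by
    filter_upwards [ae_eventually_notMem hsum] with x hx
    filter_upwards [hx, eventually_ge_atTop ⌈‖x‖⌉₊] with n hxn hn
    by_contra hxK
    exact hxn ⟨mem_closedBall_zero_iff.2 (Nat.ceil_le.1 hn), hxK⟩
  refine ⟨hf, (lintegral_le_of_ae_eventually_mem hf.enorm hK hae hKf).trans_lt ?_⟩
  simpa using hM

variable [CompleteSpace Y]

theorem norm_integral_sub_le_of_riemannSumsConverge (h𝒮 : IsAEMorseCover μ lam univ 𝒮)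
    (hG0 : G ∅ = 0) (hG : CountablyAdditive G)
    (hGnull : ∀ E, MeasurableSet E → μ E = 0 → G E = 0) (hf : Integrable f μ)
    (hR : RiemannSumsConverge μ 𝒮 f G) {ε : ℝ} (hε : 0 < ε) :
    ‖∫ x, f x ∂μ - G univ‖ ≤ 6 * ε := by
  set ν := (fun E => ∫ x in E, f x ∂μ) - G
  have hν : CountablyAdditive ν := (countablyAdditive_setIntegral hf).sub hG
  have hν0 : ν ∅ = 0 := by simp [ν, hG0]
  have hνnull : ∀ E, MeasurableSet E → μ E = 0 → ν E = 0 := fun E hE hμE => by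
    simp [ν, setIntegral_measure_zero _ hμE, hGnull E hE hμE]
  obtain ⟨m, hm⟩ := hν.exists_forall_norm_le_of_subset_compl hν0
    (fun k => measurableSet_closedBall) (fun k l hkl => closedBall_subset_closedBall
      (Nat.cast_le.2 hkl)) (iUnion_closedBall_nat 0) hε
  obtain ⟨θ, hθ, hθν⟩ := hν.exists_forall_norm_le_of_measure_le hν0 hνnull hε
  have hεpos : ENNReal.ofReal ε ≠ 0 := (ENNReal.ofReal_pos.2 hε).ne'
  obtain ⟨δf, hδf, hδfε⟩ := exists_pos_setLIntegral_lt_of_measure_lt hf.2.ne hεpos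
  have hμB : ∀ r : ℝ, μ (closedBall (0 : X) r) ≠ ∞ :=
    fun r => (isCompact_closedBall _ _).measure_lt_top.ne
  obtain ⟨η, hη, hημ⟩ := ENNReal.exists_nnreal_pos_mul_lt (hμB (1 + m)) hεpos
  obtain ⟨K, hKA, hK, hμK, hfK, C, hC⟩ := hf.1.exists_isCompact_eventually_dist_le
    measurableSet_closedBall (hμB m) hθ.ne' (NNReal.coe_pos.2 hη)
  obtain ⟨ω, hω, hμω⟩ := hK.exists_measure_cthickening_sdiff_lt (μ := μ)
    (t := min δf (ENNReal.ofReal ε / ENNReal.ofReal C)) (by simp [hδf.ne', hε])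
  obtain ⟨δ, hδ, hδR⟩ := hR ε hε
  obtain ⟨I, T, hexh, hfine, s, a, hsa, hsub⟩ := h𝒮.exists_isAdaptedFamily hK.isClosed hfK hω.1 hδ
  set V := ⋃ i, s i
  have hVm : MeasurableSet V := .iUnion hsa.measurableSet
  have hV : ‖ν V‖ ≤ 4 * ε := by
    refine hsa.norm_setIntegral_iUnion_sub_le hK.measurableSet hf hG hC hε.le ?_
      (hμω.le.trans (min_le_right _ _)) (hδfε _ (hμω.trans_le (min_le_left _ _))).le ?_
    · rw [ENNReal.ofReal_coe_nnreal]
      refine le_trans ?_ hημ.le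
      gcongr
      rw [← cthickening_closedBall zero_le_one (Nat.cast_nonneg m)]
      exact cthickening_mono hω.2 _ |>.trans' (cthickening_subset_of_subset _ hKA)
    · refine (hsub (fun S x => ‖(μ S).toReal • f x - G S‖ₑ) fun x => by simp [hG0]).trans ?_
      exact (hδR I T hexh hfine).le
  have hVc : ‖ν Vᶜ‖ ≤ 2 * ε := by
    refine hν.norm_le_of_measure_inter_le hν0 measurableSet_closedBall hVm.compl hm hθν ?_
    refine (measure_mono (t := (closedBall 0 m \ K) ∪ (K \ V)) fun x hx => ?_).trans
      ((measure_union_le _ _).trans (by rw [hsa.measure_sdiff_iUnion, add_zero]; exact hμK))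
    by_cases hxK : x ∈ K
    exacts [Or.inr ⟨hxK, hx.1⟩, Or.inl ⟨hx.2, hxK⟩]
  calc ‖∫ x, f x ∂μ - G univ‖ = ‖ν V + ν Vᶜ‖ := by
        rw [← hν.union hν0 hVm hVm.compl disjoint_compl_right, union_compl_self]
        simp [ν]
    _ ≤ 4 * ε + 2 * ε := (norm_add_le _ _).trans (add_le_add hV hVc)
    _ = 6 * ε := by ring

theorem integral_eq_of_riemannSumsConverge (h𝒮 : IsAEMorseCover μ lam univ 𝒮) (hG0 : G ∅ = 0)
    (hG : CountablyAdditive G) (hGnull : ∀ E, MeasurableSet E → μ E = 0 → G E = 0)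
    (hf : Integrable f μ) (hR : RiemannSumsConverge μ 𝒮 f G) : ∫ x, f x ∂μ = G univ :=
  eq_of_forall_dist_le fun ε hε => by
    simpa [dist_eq_norm, mul_div_cancel₀] using
      norm_integral_sub_le_of_riemannSumsConverge h𝒮 hG0 hG hGnull hf hR (ε := ε / 6)
        (by positivity)

end RiemannSums

theorem bochner_integrable_of_riemann_sums_general
    {X Y : Type*} [NormedAddCommGroup X] [NormedSpace ℝ X] [FiniteDimensional ℝ X]
    [MeasurableSpace X] [OpensMeasurableSpace X]
    [NormedAddCommGroup Y] [NormedSpace ℝ Y] [CompleteSpace Y]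
    (μ : Measure X) [μ.Regular]
    (lam : ℝ)
    (𝒮 : Set (X × Set X)) (h𝒮 : IsAEMorseCover μ lam Set.univ 𝒮)
    (G : Set X → Y)
    (hG0 : G ∅ = 0)
    (hGadd : ∀ E : ℕ → Set X, (∀ i, MeasurableSet (E i)) →
      (∀ i j, i ≠ j → Disjoint (E i) (E j)) →
      Filter.Tendsto (fun n => ∑ i ∈ Finset.range n, G (E i)) Filter.atTop
        (nhds (G (⋃ i, E i))))
    (hGnull : ∀ E : Set X, MeasurableSet E → μ E = 0 → G E = 0)
    (M : ENNReal) (hM : M < ⊤)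
    (hMsup : ∀ (I : Set ℕ) (T : ℕ → X × Set X), IsExhausting μ Set.univ 𝒮 I T →
      (∑' i : I, (‖G (T i).2‖₊ : ENNReal)) ≤ M)
    (f : X → Y) (hf : MuMeasurable μ f)
    (hriemann : ∀ ε > (0:ℝ), ∃ δ : X → ℝ, (∀ x : X, δ x ∈ Set.Ioc (0:ℝ) 1) ∧
      ∀ (I : Set ℕ) (T : ℕ → X × Set X), IsExhausting μ Set.univ 𝒮 I T →
        (∀ i ∈ I, (T i).2 ⊆ Metric.closedBall (T i).1 (δ (T i).1)) →
        (∑' i : I, (‖(μ (T i).2).toReal • f (T i).1 - G (T i).2‖₊ : ENNReal)) <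
          ENNReal.ofReal ε) :
    Integrable f μ ∧ ∫ x, f x ∂μ = G Set.univ := by
  have hG : CountablyAdditive G := fun E hE hd => hGadd E hE fun i j hij => hd hij
  have hint := integrable_of_riemannSumsConverge h𝒮 hG0 hM hMsup hf.aestronglyMeasurable hriemann
  exact ⟨hint, integral_eq_of_riemannSumsConverge h𝒮 hG0 hG hGnull hint hriemann⟩

/-- Let `μ` be a Radon measure on `X`, `Y` a Banach space, and `𝒮` a `μ`-a.e. `λ`-Morse
cover of `X` with `μ(S \ S°) = 0` for each `S ∈ 𝒮`.  Suppose `G : M → Y` is countably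
additive (for every ordering of any pairwise disjoint measurable sequence), vanishes on
`μ`-null sets, and `sup { Σ_i ‖G(S_i)‖ : ⟨S_i⟩ μ-exhausting of X from 𝒮 } < ∞`.  If a
`μ`-measurable `f : X → Y` satisfies: for every `ε > 0` there is a gauge
`δ : X → (0,1]` such that every `δ`-fine `μ`-exhausting sequence `⟨S_i(x_i)⟩` from `𝒮`
has `Σ_i ‖f(x_i)·μ(S_i) − G(S_i)‖ < ε`, then `f` is Bochner `μ`-integrable and
`∫_X f dμ = G(X)`. -/
theorem bochner_integrable_of_riemann_sums
    {X Y : Type*} [NormedAddCommGroup X] [NormedSpace ℝ X] [FiniteDimensional ℝ X]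
    [MeasurableSpace X] [OpensMeasurableSpace X]
    [NormedAddCommGroup Y] [NormedSpace ℝ Y] [CompleteSpace Y]
    (μ : Measure X) [μ.Regular] [μ.IsComplete]
    (lam : ℝ) (hlam : 1 ≤ lam)
    (𝒮 : Set (X × Set X)) (h𝒮 : IsAEMorseCover μ lam Set.univ 𝒮)
    (hbdry : ∀ p ∈ 𝒮, μ (p.2 \ interior p.2) = 0)
    (G : Set X → Y)
    (hG0 : G ∅ = 0)
    (hGadd : ∀ E : ℕ → Set X, (∀ i, MeasurableSet (E i)) →
      (∀ i j, i ≠ j → Disjoint (E i) (E j)) →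
      Filter.Tendsto (fun n => ∑ i ∈ Finset.range n, G (E i)) Filter.atTop
        (nhds (G (⋃ i, E i))))
    (hGnull : ∀ E : Set X, MeasurableSet E → μ E = 0 → G E = 0)
    (M : ENNReal) (hM : M < ⊤)
    (hMsup : ∀ (I : Set ℕ) (T : ℕ → X × Set X), IsExhausting μ Set.univ 𝒮 I T →
      (∑' i : I, (‖G (T i).2‖₊ : ENNReal)) ≤ M)
    (f : X → Y) (hf : MuMeasurable μ f)
    (hriemann : ∀ ε > (0:ℝ), ∃ δ : X → ℝ, (∀ x : X, δ x ∈ Set.Ioc (0:ℝ) 1) ∧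
      ∀ (I : Set ℕ) (T : ℕ → X × Set X), IsExhausting μ Set.univ 𝒮 I T →
        (∀ i ∈ I, (T i).2 ⊆ Metric.closedBall (T i).1 (δ (T i).1)) →
        (∑' i : I, (‖(μ (T i).2).toReal • f (T i).1 - G (T i).2‖₊ : ENNReal)) <
          ENNReal.ofReal ε) :
    Integrable f μ ∧ ∫ x, f x ∂μ = G Set.univ :=
  bochner_integrable_of_riemann_sums_general μ lam 𝒮 h𝒮 G hG0 hGadd hGnull M hM hMsup f hf hriemann
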